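/- (Pointwise coassociative characterization, proved in Section 2.2.1) Let x, y, z, w be orthonormal vectors in ℝ⁷ and let S be their span. Then φ vanishes identically on S (i.e. φ(u,v,r) = 0 for all u,v,r ∈ S) if and only if |ψ(x,y,z,w)| = 1. -/

import Mathlib

/-!
Every identity of G₂ linear algebra needed here is a polynomial identity in the coordinates,
checked by `ring` once `φ` and `ψ` are written as sums of 3×3 and 4×4 minors. The two that carry
the argument are `⟪x × y, a × b⟫ = ⟪x, a⟫⟪y, b⟫ - ⟪x, b⟫⟪y, a⟫ - ψ(x, y, a, b)` and
`‖χ(x, y, z)‖² + φ(x, y, z)² = |x ∧ y ∧ z|²`.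

For orthonormal `x, y, z, w` the second one gives
`‖χ(x, y, z) - ψ(x, y, z, w) w‖² + φ(x, y, z)² = 1 - ψ(x, y, z, w)²`.
If `|ψ(x, y, z, w)| = 1`, then `φ(x, y, z) = 0` and `χ(x, y, z) = ±w`; as `χ(x, y, z)` is
orthogonal to `x × y`, `x × z` and `y × z`, so is `w`, i.e. `φ` vanishes on the other three
triples of the frame, hence on the span by trilinearity. Conversely, if `φ` vanishes on the four
triples, the first identity makes `x, y, z, w, x × y, x × z, y × z` an orthonormal basis of ℝ⁷
whose members other than `w` are all orthogonal to `χ(x, y, z)`; so `χ(x, y, z) = ψ(x, y, z, w) w`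
and the displayed identity forces `ψ(x, y, z, w)² = 1`.
-/

open scoped RealInnerProductSpace

noncomputable section

abbrev E7 : Type := EuclideanSpace ℝ (Fin 7)

/-- The standard orthonormal basis vectors of ℝ⁷. -/
def e7 (i : Fin 7) : E7 := EuclideanSpace.single i 1

/-- Kronecker delta. -/
def kd7 (i j : Fin 7) : ℝ := if i = j then 1 else 0

/-- `e^{abc}(e_i, e_j, e_k)` : component of a wedge of three dual basis covectors. -/
def trip7 (a b c i j k : Fin 7) : ℝ :=
  Matrix.det !![kd7 a i, kd7 a j, kd7 a k;
                kd7 b i, kd7 b j, kd7 b k;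
                kd7 c i, kd7 c j, kd7 c k]

/-- `e^{abcd}(e_i, e_j, e_k, e_l)` : component of a wedge of four dual basis covectors. -/
def quad7 (a b c d i j k l : Fin 7) : ℝ :=
  Matrix.det !![kd7 a i, kd7 a j, kd7 a k, kd7 a l;
                kd7 b i, kd7 b j, kd7 b k, kd7 b l;
                kd7 c i, kd7 c j, kd7 c k, kd7 c l;
                kd7 d i, kd7 d j, kd7 d k, kd7 d l]

/-- Components `φ_{ijk}` of the standard G₂ 3-form
`φ = e¹²³ + e¹⁴⁵ − e¹⁶⁷ + e²⁴⁶ − e²⁷⁵ + e³⁴⁷ − e³⁵⁶` (indices shifted to be 0-based). -/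
def phiC (i j k : Fin 7) : ℝ :=
  trip7 0 1 2 i j k + trip7 0 3 4 i j k - trip7 0 5 6 i j k
  + trip7 1 3 5 i j k - trip7 1 6 4 i j k + trip7 2 3 6 i j k - trip7 2 4 5 i j k

/-- Components `ψ_{ijkl}` of the Hodge dual 4-form
`ψ = e⁴⁵⁶⁷ − e²³⁴⁵ + e²³⁶⁷ − e³¹⁴⁶ + e³¹⁷⁵ − e¹²⁴⁷ + e¹²⁵⁶` (0-based). -/
def psiC (i j k l : Fin 7) : ℝ :=
  quad7 3 4 5 6 i j k l - quad7 1 2 3 4 i j k l + quad7 1 2 5 6 i j k l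
  - quad7 2 0 3 5 i j k l + quad7 2 0 6 4 i j k l
  - quad7 0 1 3 6 i j k l + quad7 0 1 4 5 i j k l

/-- The standard G₂ 3-form evaluated on arbitrary vectors. -/
def phi7 (x y z : E7) : ℝ := ∑ i, ∑ j, ∑ k, x i * y j * z k * phiC i j k

/-- The 4-form ψ evaluated on arbitrary vectors. -/
def psi7 (x y z w : E7) : ℝ :=
  ∑ i, ∑ j, ∑ k, ∑ l, x i * y j * z k * w l * psiC i j k l

/-- The cross product on ℝ⁷, characterized by `⟨x × y, z⟩ = φ(x,y,z)`. -/
def cross7 (x y : E7) : E7 := (WithLp.equiv 2 (Fin 7 → ℝ)).symm fun k => phi7 x y (e7 k)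

/-- The vector-valued 3-form χ, characterized by `⟨χ(x,y,z), w⟩ = ψ(x,y,z,w)`. -/
def chi7 (x y z : E7) : E7 := (WithLp.equiv 2 (Fin 7 → ℝ)).symm fun l => psi7 x y z (e7 l)

theorem Matrix.det_fin_four {R : Type*} [CommRing R] (A : Matrix (Fin 4) (Fin 4) R) :
    A.det = A 0 0 * A 1 1 * A 2 2 * A 3 3 - A 0 0 * A 1 1 * A 2 3 * A 3 2
      - A 0 0 * A 1 2 * A 2 1 * A 3 3 + A 0 0 * A 1 2 * A 2 3 * A 3 1
      + A 0 0 * A 1 3 * A 2 1 * A 3 2 - A 0 0 * A 1 3 * A 2 2 * A 3 1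
      - A 0 1 * A 1 0 * A 2 2 * A 3 3 + A 0 1 * A 1 0 * A 2 3 * A 3 2
      + A 0 1 * A 1 2 * A 2 0 * A 3 3 - A 0 1 * A 1 2 * A 2 3 * A 3 0
      - A 0 1 * A 1 3 * A 2 0 * A 3 2 + A 0 1 * A 1 3 * A 2 2 * A 3 0
      + A 0 2 * A 1 0 * A 2 1 * A 3 3 - A 0 2 * A 1 0 * A 2 3 * A 3 1
      - A 0 2 * A 1 1 * A 2 0 * A 3 3 + A 0 2 * A 1 1 * A 2 3 * A 3 0
      + A 0 2 * A 1 3 * A 2 0 * A 3 1 - A 0 2 * A 1 3 * A 2 1 * A 3 0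
      - A 0 3 * A 1 0 * A 2 1 * A 3 2 + A 0 3 * A 1 0 * A 2 2 * A 3 1
      + A 0 3 * A 1 1 * A 2 0 * A 3 2 - A 0 3 * A 1 1 * A 2 2 * A 3 0
      - A 0 3 * A 1 2 * A 2 0 * A 3 1 + A 0 3 * A 1 2 * A 2 1 * A 3 0 := by
  simp [Matrix.det_succ_row_zero, Fin.sum_univ_succ, Fin.succAbove]
  ring

def wedge3 (a b c : Fin 7) (x y z : E7) : ℝ :=
  !![x a, x b, x c; y a, y b, y c; z a, z b, z c].det

def wedge4 (a b c d : Fin 7) (x y z w : E7) : ℝ :=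
  !![x a, x b, x c, x d; y a, y b, y c, y d; z a, z b, z c, z d; w a, w b, w c, w d].det

theorem wedge3_eq (a b c : Fin 7) (x y z : E7) : wedge3 a b c x y z =
    x a * y b * z c - x a * y c * z b - x b * y a * z c + x b * y c * z a + x c * y a * z b
      - x c * y b * z a := by
  simp only [wedge3, Matrix.det_fin_three, Matrix.of_apply, Matrix.cons_val', Matrix.cons_val_zero,
    Matrix.cons_val_one, Matrix.cons_val, Matrix.cons_val_fin_one]

theorem wedge4_eq (a b c d : Fin 7) (x y z w : E7) : wedge4 a b c d x y z w =
    x a * wedge3 b c d y z w - x b * wedge3 a c d y z w + x c * wedge3 a b d y z w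
      - x d * wedge3 a b c y z w := by
  simp only [wedge4, Matrix.det_fin_four, Matrix.of_apply, Matrix.cons_val', Matrix.cons_val_zero,
    Matrix.cons_val_one, Matrix.cons_val, Matrix.cons_val_fin_one, wedge3_eq]
  ring

theorem sum_mul_trip7 (a b c : Fin 7) (x y z : E7) :
    ∑ i, ∑ j, ∑ k, x i * y j * z k * trip7 a b c i j k = wedge3 a b c x y z := by
  simp only [trip7, wedge3, kd7, Matrix.det_fin_three, Matrix.of_apply, Matrix.cons_val',
    Matrix.cons_val_zero, Matrix.cons_val_one, Matrix.cons_val, Matrix.cons_val_fin_one, mul_ite,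
    mul_one, mul_zero, mul_sub, mul_add, Finset.sum_sub_distrib, Finset.sum_add_distrib,
    Finset.sum_ite_eq, Finset.mem_univ, if_true, Finset.sum_ite_irrel, Finset.sum_const_zero]
  ring

theorem sum_mul_quad7 (a b c d : Fin 7) (x y z w : E7) :
    ∑ i, ∑ j, ∑ k, ∑ l, x i * y j * z k * w l * quad7 a b c d i j k l =
      wedge4 a b c d x y z w := by
  simp only [quad7, wedge4, kd7, Matrix.det_fin_four, Matrix.of_apply, Matrix.cons_val',
    Matrix.cons_val_zero, Matrix.cons_val_one, Matrix.cons_val, Matrix.cons_val_fin_one, mul_ite,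
    mul_one, mul_zero, mul_sub, mul_add, Finset.sum_sub_distrib, Finset.sum_add_distrib,
    Finset.sum_ite_eq, Finset.mem_univ, if_true, Finset.sum_ite_irrel, Finset.sum_const_zero]
  ring

theorem phi7_eq_wedge3 (x y z : E7) : phi7 x y z =
    wedge3 0 1 2 x y z + wedge3 0 3 4 x y z - wedge3 0 5 6 x y z + wedge3 1 3 5 x y z
      - wedge3 1 6 4 x y z + wedge3 2 3 6 x y z - wedge3 2 4 5 x y z := by
  simp only [phi7, phiC, mul_add, mul_sub, Finset.sum_add_distrib, Finset.sum_sub_distrib,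
    sum_mul_trip7]

theorem psi7_eq_wedge4 (x y z w : E7) : psi7 x y z w =
    wedge4 3 4 5 6 x y z w - wedge4 1 2 3 4 x y z w + wedge4 1 2 5 6 x y z w
      - wedge4 2 0 3 5 x y z w + wedge4 2 0 6 4 x y z w - wedge4 0 1 3 6 x y z w
      + wedge4 0 1 4 5 x y z w := by
  simp only [psi7, psiC, mul_add, mul_sub, Finset.sum_add_distrib, Finset.sum_sub_distrib,
    sum_mul_quad7]

theorem cross7_apply (x y : E7) (k : Fin 7) : cross7 x y k = phi7 x y (e7 k) := rfl

theorem chi7_apply (x y z : E7) (l : Fin 7) : chi7 x y z l = psi7 x y z (e7 l) := rfl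

section CoordinateIdentities

variable (x y z v a b : E7)

theorem phi7_swap₁₂ : phi7 y x z = -phi7 x y z := by
  simp only [phi7_eq_wedge3, wedge3_eq]
  ring

theorem phi7_swap₂₃ : phi7 x z y = -phi7 x y z := by
  simp only [phi7_eq_wedge3, wedge3_eq]
  ring

theorem psi7_swap₁₂ : psi7 y x z v = -psi7 x y z v := by
  simp only [psi7_eq_wedge4, wedge4_eq, wedge3_eq]
  ring

theorem psi7_swap₂₃ : psi7 x z y v = -psi7 x y z v := by
  simp only [psi7_eq_wedge4, wedge4_eq, wedge3_eq]
  ring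

theorem psi7_swap₃₄ : psi7 x y v z = -psi7 x y z v := by
  simp only [psi7_eq_wedge4, wedge4_eq, wedge3_eq]
  ring

theorem inner_cross7 : ⟪cross7 x y, v⟫ = phi7 x y v := by
  simp only [PiLp.inner_apply, RCLike.inner_apply, conj_trivial, Fin.sum_univ_seven, cross7_apply,
    e7, PiLp.single_apply, Fin.reduceEq, if_true, if_false, phi7_eq_wedge3, wedge3_eq]
  ring

theorem inner_chi7 : ⟪chi7 x y z, v⟫ = psi7 x y z v := by
  simp only [PiLp.inner_apply, RCLike.inner_apply, conj_trivial, Fin.sum_univ_seven, chi7_apply, e7,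
    PiLp.single_apply, Fin.reduceEq, if_true, if_false, psi7_eq_wedge4, wedge4_eq, wedge3_eq]
  ring

theorem inner_cross7_cross7 :
    ⟪cross7 x y, cross7 a b⟫ = ⟪x, a⟫ * ⟪y, b⟫ - ⟪x, b⟫ * ⟪y, a⟫ - psi7 x y a b := by
  simp only [PiLp.inner_apply, RCLike.inner_apply, conj_trivial, Fin.sum_univ_seven, cross7_apply,
    e7, PiLp.single_apply, Fin.reduceEq, if_true, if_false, phi7_eq_wedge3, psi7_eq_wedge4,
    wedge4_eq, wedge3_eq]
  ring

theorem inner_chi7_self_add_phi7_sq :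
    ⟪chi7 x y z, chi7 x y z⟫ + phi7 x y z ^ 2 =
      ⟪x, x⟫ * ⟪y, y⟫ * ⟪z, z⟫ + 2 * ⟪x, y⟫ * ⟪y, z⟫ * ⟪z, x⟫
        - ⟪x, x⟫ * ⟪y, z⟫ ^ 2 - ⟪y, y⟫ * ⟪z, x⟫ ^ 2 - ⟪z, z⟫ * ⟪x, y⟫ ^ 2 := by
  simp only [PiLp.inner_apply, RCLike.inner_apply, conj_trivial, Fin.sum_univ_seven, chi7_apply, e7,
    PiLp.single_apply, Fin.reduceEq, if_true, if_false, phi7_eq_wedge3, psi7_eq_wedge4, wedge4_eq,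
    wedge3_eq]
  ring

end CoordinateIdentities

section Alternating

variable (x y z v : E7)

theorem phi7_cycle : phi7 y z x = phi7 x y z := by
  rw [phi7_swap₂₃ y x z, phi7_swap₁₂, neg_neg]

theorem phi7_self₁₂ : phi7 x x z = 0 := by
  linarith [phi7_swap₁₂ x x z]

theorem phi7_self₂₃ : phi7 x y y = 0 := by
  linarith [phi7_swap₂₃ x y y]

theorem phi7_self₁₃ : phi7 x y x = 0 := by
  rw [phi7_swap₂₃, phi7_self₁₂, neg_zero]

theorem psi7_self₁₃ : psi7 x y x v = 0 := by
  linarith [psi7_swap₁₂ x y x v, psi7_swap₂₃ x x y v, psi7_swap₂₃ y x x v, psi7_swap₁₂ x x y v]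

theorem psi7_self₂₃ : psi7 x y y v = 0 := by
  linarith [psi7_swap₂₃ x y y v]

theorem psi7_self₂₄ : psi7 x y z y = 0 := by
  rw [psi7_swap₃₄, psi7_self₂₃, neg_zero]

theorem psi7_self₁₄ : psi7 x y z x = 0 := by
  rw [psi7_swap₃₄, psi7_self₁₃, neg_zero]

theorem psi7_self₃₄ : psi7 x y z z = 0 := by
  linarith [psi7_swap₃₄ x y z z]

end Alternating

theorem inner_cross7_left (x y v : E7) : ⟪v, cross7 x y⟫ = phi7 x y v := by
  rw [real_inner_comm, inner_cross7]

theorem psi7_cross7₁₂ (x y z : E7) : psi7 x y z (cross7 x y) = 0 := by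
  have h := inner_cross7_cross7 x y z (cross7 x y)
  simp only [inner_cross7_left, phi7_self₁₃, phi7_self₂₃] at h
  linarith

theorem psi7_cross7₁₃ (x y z : E7) : psi7 x y z (cross7 x z) = 0 := by
  linarith [psi7_swap₂₃ x y z (cross7 x z), psi7_cross7₁₂ x z y]

theorem psi7_cross7₂₃ (x y z : E7) : psi7 x y z (cross7 y z) = 0 := by
  linarith [psi7_swap₁₂ x y z (cross7 y z), psi7_swap₂₃ y x z (cross7 y z), psi7_cross7₁₂ y z x]

theorem phi7_eq_zero_of_mem_span {a b r : E7} {s : Set E7} (h : ∀ c ∈ s, phi7 a b c = 0)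
    (hr : r ∈ Submodule.span ℝ s) : phi7 a b r = 0 := by
  rw [← inner_cross7]
  exact LinearMap.eqOn_span (f := innerₛₗ ℝ (cross7 a b)) (g := 0)
    (fun c hc => by simpa [inner_cross7] using h c hc) hr

theorem phi7_eq_zero_on_span {s : Set E7} (h : ∀ a ∈ s, ∀ b ∈ s, ∀ c ∈ s, phi7 a b c = 0) :
    ∀ u ∈ Submodule.span ℝ s, ∀ v ∈ Submodule.span ℝ s, ∀ r ∈ Submodule.span ℝ s,
      phi7 u v r = 0 := by
  intro u hu v hv r hr
  -- linearity in the last slot, moved to each slot in turn by the cyclic symmetry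
  have h₁ : ∀ a ∈ s, ∀ b ∈ s, phi7 a b r = 0 := fun a ha b hb =>
    phi7_eq_zero_of_mem_span (h a ha b hb) hr
  have h₂ : ∀ a ∈ s, phi7 a v r = 0 := fun a ha => by
    rw [phi7_cycle]
    exact phi7_eq_zero_of_mem_span (fun b hb => by rw [← phi7_cycle]; exact h₁ a ha b hb) hv
  rw [← phi7_cycle]
  exact phi7_eq_zero_of_mem_span (fun a ha => by rw [phi7_cycle]; exact h₂ a ha) hu

theorem phi7_eq_zero_of_mem_four {x y z w : E7} (h₁ : phi7 x y z = 0) (h₂ : phi7 x y w = 0)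
    (h₃ : phi7 x z w = 0) (h₄ : phi7 y z w = 0) :
    ∀ a ∈ ({x, y, z, w} : Set E7), ∀ b ∈ ({x, y, z, w} : Set E7),
      ∀ c ∈ ({x, y, z, w} : Set E7), phi7 a b c = 0 := by
  have perms : ∀ {a b c : E7}, phi7 a b c = 0 → phi7 a c b = 0 ∧ phi7 b a c = 0 ∧
      phi7 b c a = 0 ∧ phi7 c a b = 0 ∧ phi7 c b a = 0 := fun {a b c} h => by
    refine ⟨?_, ?_, ?_, ?_, ?_⟩ <;>
      linarith [phi7_swap₂₃ a b c, phi7_swap₁₂ a b c, phi7_cycle a b c, phi7_cycle b c a,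
        phi7_swap₂₃ c a b]
  obtain ⟨_, _, _, _, _⟩ := perms h₁
  obtain ⟨_, _, _, _, _⟩ := perms h₂
  obtain ⟨_, _, _, _, _⟩ := perms h₃
  obtain ⟨_, _, _, _, _⟩ := perms h₄
  simp only [Set.mem_insert_iff, Set.mem_singleton_iff]
  rintro a (rfl | rfl | rfl | rfl) b (rfl | rfl | rfl | rfl) c (rfl | rfl | rfl | rfl) <;>
    simp only [phi7_self₁₂, phi7_self₂₃, phi7_self₁₃, *]

theorem orthonormal_vec_four_iff {E : Type*} [NormedAddCommGroup E] [InnerProductSpace ℝ E]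
    {x y z w : E} :
    Orthonormal ℝ ![x, y, z, w] ↔
      (⟪x, x⟫ = 1 ∧ ⟪x, y⟫ = 0 ∧ ⟪x, z⟫ = 0 ∧ ⟪x, w⟫ = 0) ∧
      (⟪y, x⟫ = 0 ∧ ⟪y, y⟫ = 1 ∧ ⟪y, z⟫ = 0 ∧ ⟪y, w⟫ = 0) ∧
      (⟪z, x⟫ = 0 ∧ ⟪z, y⟫ = 0 ∧ ⟪z, z⟫ = 1 ∧ ⟪z, w⟫ = 0) ∧
      ⟪w, x⟫ = 0 ∧ ⟪w, y⟫ = 0 ∧ ⟪w, z⟫ = 0 ∧ ⟪w, w⟫ = 1 := by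
  simp only [orthonormal_iff_ite, Fin.forall_fin_succ, IsEmpty.forall_iff, Matrix.cons_val_zero,
    Matrix.cons_val_succ, Fin.succ_inj, Fin.succ_ne_zero, (Fin.succ_ne_zero _).symm, if_true,
    if_false, and_true]

theorem orthonormal_cross7_frame {x y z w : E7} (h : Orthonormal ℝ ![x, y, z, w])
    (h₁ : phi7 x y z = 0) (h₂ : phi7 x y w = 0) (h₃ : phi7 x z w = 0) (h₄ : phi7 y z w = 0) :
    Orthonormal ℝ ![x, y, z, w, cross7 x y, cross7 x z, cross7 y z] := by
  obtain ⟨⟨hxx, hxy, hxz, hxw⟩, ⟨hyx, hyy, hyz, hyw⟩, ⟨hzx, hzy, hzz, hzw⟩, hwx, hwy, hwz, hww⟩ :=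
    orthonormal_vec_four_iff.mp h
  have h₁' : phi7 x z y = 0 := by rw [phi7_swap₂₃, h₁, neg_zero]
  have h₁'' : phi7 y z x = 0 := by rw [phi7_cycle, h₁]
  rw [orthonormal_iff_ite]
  intro i j
  fin_cases i <;> fin_cases j <;> dsimp <;> (try rw [inner_cross7_cross7]) <;>
    simp only [inner_cross7, inner_cross7_left, phi7_self₂₃, phi7_self₁₃, psi7_self₁₃,
      psi7_self₁₄, psi7_self₂₃, psi7_self₂₄, *] <;> norm_num

theorem norm_chi7_sub_sq_add_phi7_sq {x y z w : E7} (h : Orthonormal ℝ ![x, y, z, w]) :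
    ‖chi7 x y z - psi7 x y z w • w‖ ^ 2 + phi7 x y z ^ 2 = 1 - psi7 x y z w ^ 2 := by
  obtain ⟨⟨hxx, hxy, -, -⟩, ⟨-, hyy, hyz, -⟩, ⟨hzx, -, hzz, -⟩, -, -, -, hww⟩ :=
    orthonormal_vec_four_iff.mp h
  have hgram := inner_chi7_self_add_phi7_sq x y z
  rw [hxx, hyy, hzz, hxy, hyz, hzx] at hgram
  rw [← real_inner_self_eq_norm_sq]
  simp only [inner_sub_left, inner_sub_right, real_inner_smul_left, real_inner_smul_right,
    real_inner_comm (chi7 x y z) w, inner_chi7 x y z w, hww]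
  linear_combination hgram

theorem phi7_eq_zero_of_abs_psi7_eq_one {x y z w : E7} (h : Orthonormal ℝ ![x, y, z, w])
    (hψ : |psi7 x y z w| = 1) :
    phi7 x y z = 0 ∧ phi7 x y w = 0 ∧ phi7 x z w = 0 ∧ phi7 y z w = 0 := by
  have hψ0 : psi7 x y z w ≠ 0 := by rintro h0; simp [h0] at hψ
  have hsum := norm_chi7_sub_sq_add_phi7_sq h
  rw [← sq_abs (psi7 x y z w), hψ, one_pow, sub_self] at hsum
  obtain ⟨hres, hφ⟩ := (add_eq_zero_iff_of_nonneg (sq_nonneg _) (sq_nonneg _)).mp hsum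
  have hχ : chi7 x y z = psi7 x y z w • w := by
    rwa [pow_eq_zero_iff two_ne_zero, norm_eq_zero, sub_eq_zero] at hres
  have of_psi7 : ∀ a b, psi7 x y z (cross7 a b) = 0 → phi7 a b w = 0 := fun a b hab => by
    rw [← inner_chi7, hχ, real_inner_smul_left, inner_cross7_left] at hab
    exact (mul_eq_zero.mp hab).resolve_left hψ0
  exact ⟨pow_eq_zero_iff two_ne_zero |>.mp hφ, of_psi7 x y (psi7_cross7₁₂ x y z),
    of_psi7 x z (psi7_cross7₁₃ x y z), of_psi7 y z (psi7_cross7₂₃ x y z)⟩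

theorem abs_psi7_eq_one_of_phi7_eq_zero {x y z w : E7} (h : Orthonormal ℝ ![x, y, z, w])
    (h₁ : phi7 x y z = 0) (h₂ : phi7 x y w = 0) (h₃ : phi7 x z w = 0) (h₄ : phi7 y z w = 0) :
    |psi7 x y z w| = 1 := by
  obtain ⟨⟨-, -, -, hxw⟩, ⟨-, -, -, hyw⟩, ⟨-, -, -, hzw⟩, -, -, -, hww⟩ :=
    orthonormal_vec_four_iff.mp h
  have hframe := orthonormal_cross7_frame h h₁ h₂ h₃ h₄
  have hχ : chi7 x y z = psi7 x y z w • w := by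
    refine InnerProductSpace.ext_inner_left_basis
      (basisOfLinearIndependentOfCardEqFinrank hframe.linearIndependent (by simp)) fun i => ?_
    rw [coe_basisOfLinearIndependentOfCardEqFinrank, real_inner_comm, inner_chi7,
      real_inner_smul_right]
    fin_cases i <;> dsimp <;>
      simp only [psi7_self₁₄, psi7_self₂₄, psi7_self₃₄, psi7_cross7₁₂, psi7_cross7₁₃,
        psi7_cross7₂₃, inner_cross7, h₂, h₃, h₄, hxw, hyw, hzw, hww, mul_zero, mul_one]
  have hsum := norm_chi7_sub_sq_add_phi7_sq h
  rw [hχ, sub_self, norm_zero, h₁] at hsum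
  rw [← pow_left_inj₀ (abs_nonneg _) zero_le_one two_ne_zero, sq_abs]
  linarith

/-- Pointwise coassociative characterization: for orthonormal `x, y, z, w` spanning `S`,
`φ` vanishes identically on `S` iff `|ψ(x,y,z,w)| = 1`. -/
theorem coassoc_characterization (x y z w : E7) (h : Orthonormal ℝ ![x, y, z, w]) :
    (∀ u ∈ Submodule.span ℝ ({x, y, z, w} : Set E7),
     ∀ v ∈ Submodule.span ℝ ({x, y, z, w} : Set E7),
     ∀ r ∈ Submodule.span ℝ ({x, y, z, w} : Set E7), phi7 u v r = 0)
    ↔ |psi7 x y z w| = 1 := by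
  set S := Submodule.span ℝ ({x, y, z, w} : Set E7)
  have hx : x ∈ S := Submodule.subset_span (by simp)
  have hy : y ∈ S := Submodule.subset_span (by simp)
  have hz : z ∈ S := Submodule.subset_span (by simp)
  have hw : w ∈ S := Submodule.subset_span (by simp)
  constructor
  · intro hφ
    exact abs_psi7_eq_one_of_phi7_eq_zero h (hφ x hx y hy z hz) (hφ x hx y hy w hw)
      (hφ x hx z hz w hw) (hφ y hy z hz w hw)
  · intro hψ
    obtain ⟨h₁, h₂, h₃, h₄⟩ := phi7_eq_zero_of_abs_psi7_eq_one h hψ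
    exact phi7_eq_zero_on_span (phi7_eq_zero_of_mem_four h₁ h₂ h₃ h₄)
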